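/- arXiv:2007.15995 — 5 statements merged into one kernel-verified Lean document; each statement's English description precedes it below -/
import Mathlib

section
/- Let L be a Hom-Lie algebra (with α satisfying condition (2.1)) and let I be a Hom-ideal of L. If Ann_L(I) = {0}, then I is an essential Hom-ideal of L. -/
/-- A Hom-Lie algebra structure on a vector space `Q` over a field `𝔽`, with the
twisting map `α` additionally satisfying condition (2.1):
`α [x,y] = [α x, y] = [x, α y]`. -/
structure HomLieAlgebra (𝔽 : Type*) [Field 𝔽] (Q : Type*) [AddCommGroup Q] [Module 𝔽 Q] where
  bracket : Q →ₗ[𝔽] Q →ₗ[𝔽] Q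
  alpha : Q →ₗ[𝔽] Q
  skew : ∀ x y, bracket x y = - bracket y x
  jacobi : ∀ x y z, bracket (alpha x) (bracket y z) + bracket (alpha y) (bracket z x)
      + bracket (alpha z) (bracket x y) = 0
  comm₁ : ∀ x y, alpha (bracket x y) = bracket (alpha x) y
  comm₂ : ∀ x y, alpha (bracket x y) = bracket x (alpha y)

namespace HomLieAlgebra

variable {𝔽 : Type*} [Field 𝔽] {Q : Type*} [AddCommGroup Q] [Module 𝔽 Q]
variable (H : HomLieAlgebra 𝔽 Q)

/-- `S` is a Hom-subalgebra: a subspace closed under `α` and the bracket. -/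
def IsSubalgebra (S : Submodule 𝔽 Q) : Prop :=
  (∀ x ∈ S, H.alpha x ∈ S) ∧ ∀ x ∈ S, ∀ y ∈ S, H.bracket x y ∈ S

/-- `I` is a Hom-ideal of the Hom-subalgebra `L`:
a subspace `I ⊆ L` with `α(I) ⊆ I` and `[I, L] ⊆ I`. -/
def IsIdealOf (L I : Submodule 𝔽 Q) : Prop :=
  I ≤ L ∧ (∀ x ∈ I, H.alpha x ∈ I) ∧ ∀ x ∈ I, ∀ y ∈ L, H.bracket x y ∈ I

/-- The α-annihilator of the set `S` inside the subalgebra `M`: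
`Ann_M(S) = {x ∈ M | [x, α(y)] = 0 for all y ∈ S}`. -/
def annIn (M : Submodule 𝔽 Q) (S : Set Q) : Set Q :=
  {x | x ∈ M ∧ ∀ y ∈ S, H.bracket x (H.alpha y) = 0}

/-- `I` is an essential Hom-ideal of `L`: it hits every nonzero Hom-ideal of `L`. -/
def IsEssentialIdealOf (L I : Submodule 𝔽 Q) : Prop :=
  H.IsIdealOf L I ∧ ∀ J : Submodule 𝔽 Q, H.IsIdealOf L J → J ≠ ⊥ → I ⊓ J ≠ ⊥

/-- The Hom-Lie algebra `L` is semiprime: `[I, α(I)] ≠ {0}` for every nonzero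
Hom-ideal `I` of `L`. -/
def IsSemiprimeOn (L : Submodule 𝔽 Q) : Prop :=
  ∀ I : Submodule 𝔽 Q, H.IsIdealOf L I → I ≠ ⊥ →
    ∃ x ∈ I, ∃ y ∈ I, H.bracket x (H.alpha y) ≠ 0

/-- The Hom-Lie algebra `L` is prime: `[I, α(J)] ≠ {0}` for all nonzero
Hom-ideals `I`, `J` of `L`. -/
def IsPrimeOn (L : Submodule 𝔽 Q) : Prop :=
  ∀ I J : Submodule 𝔽 Q, H.IsIdealOf L I → I ≠ ⊥ → H.IsIdealOf L J → J ≠ ⊥ →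
    ∃ x ∈ I, ∃ y ∈ J, H.bracket x (H.alpha y) ≠ 0

/-- The iterated brackets `[[…[[q,x₁],x₂],…],xₙ]` with `xᵢ ∈ L` (including `q` itself). -/
inductive IsWord (L : Submodule 𝔽 Q) (q : Q) : Q → Prop
  | base : IsWord L q q
  | step {p : Q} (x : Q) : IsWord L q p → x ∈ L → IsWord L q (H.bracket p x)

/-- `_L(q)`: the linear span in `Q` of `q` together with all the iterated brackets
`[[…[[q,x₁],x₂],…],xₙ]` with `xᵢ ∈ L`. -/
def wordSpan (L : Submodule 𝔽 Q) (q : Q) : Submodule 𝔽 Q :=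
  Submodule.span 𝔽 {p | H.IsWord L q p}

/-- `(L : q) = {x ∈ L | [x, α(_L(q))] ⊆ L}`, as a subspace of `Q`. -/
def quotIdeal (L : Submodule 𝔽 Q) (q : Q) : Submodule 𝔽 Q where
  carrier := {x | x ∈ L ∧ ∀ p ∈ H.wordSpan L q, H.bracket x (H.alpha p) ∈ L}
  add_mem' := by
    rintro a b ⟨haL, ha⟩ ⟨hbL, hb⟩
    refine ⟨L.add_mem haL hbL, fun p hp => ?_⟩
    rw [map_add, LinearMap.add_apply]
    exact L.add_mem (ha p hp) (hb p hp)
  zero_mem' := ⟨L.zero_mem, fun p _ => by simp⟩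
  smul_mem' := by
    rintro c a ⟨haL, ha⟩
    refine ⟨L.smul_mem c haL, fun p hp => ?_⟩
    rw [map_smul, LinearMap.smul_apply]
    exact L.smul_mem c (ha p hp)

/-- `Q` is an algebra of quotients of its Hom-subalgebra `L`: for all `p, q ∈ Q` with
`p ≠ 0` there is `x ∈ (L : q)` with `[x, α(p)] ≠ 0`. -/
def IsAlgebraOfQuotients (L : Submodule 𝔽 Q) : Prop :=
  ∀ p q : Q, p ≠ 0 → ∃ x ∈ H.quotIdeal L q, H.bracket x (H.alpha p) ≠ 0

/-- `Q` is a weak algebra of quotients of its Hom-subalgebra `L`: for every nonzero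
`q ∈ Q` there is `x ∈ L` with `0 ≠ [x, α(q)] ∈ L`. -/
def IsWeakAlgebraOfQuotients (L : Submodule 𝔽 Q) : Prop :=
  ∀ q : Q, q ≠ 0 → ∃ x ∈ L, H.bracket x (H.alpha q) ≠ 0 ∧ H.bracket x (H.alpha q) ∈ L

/-- `Q` is ideally absorbed into `L`: for every nonzero `q ∈ Q` there is a Hom-ideal `I`
of `L` with `Ann_L(I) = {0}` and `{0} ≠ [I, α(q)] ⊆ L`. -/
def IsIdeallyAbsorbed (L : Submodule 𝔽 Q) : Prop :=
  ∀ q : Q, q ≠ 0 → ∃ I : Submodule 𝔽 Q, H.IsIdealOf L I ∧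
    H.annIn L (I : Set Q) = {0} ∧
    (∃ y ∈ I, H.bracket y (H.alpha q) ≠ 0) ∧
    ∀ y ∈ I, H.bracket y (H.alpha q) ∈ (L : Set Q)

/-- The inner derivation `ad_q : p ↦ [α(q), p]`. -/
def ad (q : Q) : Module.End 𝔽 Q := H.bracket (H.alpha q)

end HomLieAlgebra

namespace HomLieAlgebra

variable {𝔽 : Type*} [Field 𝔽] {Q : Type*} [AddCommGroup Q] [Module 𝔽 Q]
variable (H : HomLieAlgebra 𝔽 Q) {L I J : Submodule 𝔽 Q}

theorem bracket_alpha_mem_inf (hI : H.IsIdealOf L I) (hJ : H.IsIdealOf L J)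
    {x y : Q} (hx : x ∈ J) (hy : y ∈ I) : H.bracket x (H.alpha y) ∈ I ⊓ J := by
  have hαy : H.alpha y ∈ I := hI.2.1 y hy
  refine ⟨?_, hJ.2.2 x hx _ (hI.1 hαy)⟩
  rw [H.skew]
  exact I.neg_mem (hI.2.2 _ hαy x (hJ.1 hx))

theorem subset_annIn_of_inf_eq_bot (hI : H.IsIdealOf L I) (hJ : H.IsIdealOf L J)
    (hIJ : I ⊓ J = ⊥) : (J : Set Q) ⊆ H.annIn L (I : Set Q) := fun x hx =>
  ⟨hJ.1 hx, fun y hy => by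
    simpa only [hIJ, Submodule.mem_bot] using H.bracket_alpha_mem_inf hI hJ hx hy⟩

end HomLieAlgebra

/-- If `I` is a Hom-ideal of a Hom-Lie algebra `L` with `Ann_L(I) = {0}`,
then `I` is an essential Hom-ideal of `L`. -/
theorem essential_of_ann_eq_zero
    {𝔽 L : Type*} [Field 𝔽] [AddCommGroup L] [Module 𝔽 L]
    (H : HomLieAlgebra 𝔽 L) (I : Submodule 𝔽 L) (hI : H.IsIdealOf ⊤ I)
    (hann : H.annIn ⊤ (I : Set L) = {0}) :
    H.IsEssentialIdealOf ⊤ I := by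
  refine ⟨hI, fun J hJ hJne hIJ => hJne ?_⟩
  have hJann : (J : Set L) ⊆ H.annIn ⊤ (I : Set L) := H.subset_annIn_of_inf_eq_bot hI hJ hIJ
  rw [hann] at hJann
  exact (Submodule.eq_bot_iff J).2 hJann
end

section
/- Let L be a semiprime Hom-Lie algebra (with α satisfying condition (2.1)) and let I be a Hom-ideal of L. Then I ∩ Ann_L(I) = {0}, and I is an essential Hom-ideal of L if and only if Ann_L(I) = {0}. -/
/-!
By the Jacobi identity and (2.1), `Ann(I)` is a Hom-ideal whenever `[I, L] ⊆ I`. Then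
`J = I ∩ Ann(I)` is a Hom-ideal with `[J, α(J)] = 0`, so semiprimeness forces `J = 0`; in
particular a nonzero `Ann(I)` witnesses that `I` is not essential. Conversely, if `I ∩ J = 0`
for a Hom-ideal `J`, then `[J, α(I)] ⊆ I ∩ J = 0`, i.e. `J ⊆ Ann(I)`.
-/

namespace HomLieAlgebra

variable {𝔽 : Type*} [Field 𝔽] {Q : Type*} [AddCommGroup Q] [Module 𝔽 Q]
variable (H : HomLieAlgebra 𝔽 Q)

theorem bracket_alpha_left (x y : Q) :
    H.bracket (H.alpha x) y = H.bracket x (H.alpha y) :=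
  (H.comm₁ x y).symm.trans (H.comm₂ x y)

def annSubmodule (M : Submodule 𝔽 Q) (S : Set Q) : Submodule 𝔽 Q where
  carrier := H.annIn M S
  add_mem' := by
    rintro a b ⟨haM, ha⟩ ⟨hbM, hb⟩
    exact ⟨M.add_mem haM hbM, fun y hy => by simp [ha y hy, hb y hy]⟩
  zero_mem' := ⟨M.zero_mem, fun y _ => by simp⟩
  smul_mem' := by
    rintro c a ⟨haM, ha⟩
    exact ⟨M.smul_mem c haM, fun y hy => by simp [ha y hy]⟩

@[simp]
theorem coe_annSubmodule (M : Submodule 𝔽 Q) (S : Set Q) :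
    (H.annSubmodule M S : Set Q) = H.annIn M S :=
  rfl

variable {H}

theorem IsIdealOf.inf {L I J : Submodule 𝔽 Q} (hI : H.IsIdealOf L I) (hJ : H.IsIdealOf L J) :
    H.IsIdealOf L (I ⊓ J) :=
  ⟨inf_le_of_left_le hI.1, fun x hx => ⟨hI.2.1 x hx.1, hJ.2.1 x hx.2⟩,
    fun x hx y hy => ⟨hI.2.2 x hx.1 y hy, hJ.2.2 x hx.2 y hy⟩⟩

theorem isIdealOf_top_annSubmodule {I : Submodule 𝔽 Q}
    (hI : ∀ x ∈ I, ∀ y, H.bracket x y ∈ I) :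
    H.IsIdealOf ⊤ (H.annSubmodule ⊤ I) := by
  refine ⟨le_top, fun x ⟨_, hx⟩ => ⟨trivial, fun y hy => ?_⟩,
    fun x ⟨_, hx⟩ z _ => ⟨trivial, fun y hy => ?_⟩⟩
  · rw [← H.comm₁, hx y hy, map_zero]
  · -- Jacobi for `y, x, z`: the terms `[α x, [z, y]]` and `[α z, [y, x]]` vanish.
    have hzy : H.bracket (H.alpha x) (H.bracket z y) = 0 := by
      rw [bracket_alpha_left, H.skew z y, map_neg, map_neg, hx _ (hI y hy z), neg_zero]
    have hyx : H.bracket (H.alpha z) (H.bracket y x) = 0 := by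
      rw [bracket_alpha_left, H.comm₁, H.skew (H.alpha y) x, hx y hy, neg_zero, map_zero]
    have hxz : H.bracket (H.alpha y) (H.bracket x z) = 0 := by
      simpa [hzy, hyx] using H.jacobi y x z
    rw [H.skew, hxz, neg_zero]

theorem le_annSubmodule_of_inf_eq_bot {L I J : Submodule 𝔽 Q} (hI : H.IsIdealOf L I)
    (hJ : H.IsIdealOf L J) (hIJ : I ⊓ J = ⊥) :
    J ≤ H.annSubmodule L I := by
  intro x hx
  refine ⟨hJ.1 hx, fun y hy => ?_⟩
  have hαy : H.alpha y ∈ I := hI.2.1 y hy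
  have hmem : H.bracket x (H.alpha y) ∈ I ⊓ J := by
    refine ⟨?_, hJ.2.2 x hx _ (hI.1 hαy)⟩
    rw [H.skew]
    exact I.neg_mem (hI.2.2 _ hαy x (hJ.1 hx))
  rwa [hIJ, Submodule.mem_bot] at hmem

theorem inf_annSubmodule_eq_bot {I : Submodule 𝔽 Q} (hsp : H.IsSemiprimeOn ⊤)
    (hI : H.IsIdealOf ⊤ I) :
    I ⊓ H.annSubmodule ⊤ I = ⊥ := by
  by_contra hne
  have hideal := hI.inf (isIdealOf_top_annSubmodule fun x hx y => hI.2.2 x hx y trivial)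
  obtain ⟨x, hx, y, hy, hxy⟩ := hsp _ hideal hne
  exact hxy (hx.2.2 y hy.1)

theorem isEssentialIdealOf_of_annSubmodule_eq_bot {L I : Submodule 𝔽 Q}
    (hI : H.IsIdealOf L I) (hann : H.annSubmodule L I = ⊥) :
    H.IsEssentialIdealOf L I :=
  ⟨hI, fun _ hJ hJne hIJ => hJne (eq_bot_iff.2 (hann ▸ le_annSubmodule_of_inf_eq_bot hI hJ hIJ))⟩

theorem annSubmodule_eq_bot_of_isEssentialIdealOf {I : Submodule 𝔽 Q}
    (hsp : H.IsSemiprimeOn ⊤) (hess : H.IsEssentialIdealOf ⊤ I) :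
    H.annSubmodule ⊤ I = ⊥ := by
  by_contra hne
  exact hess.2 _ (isIdealOf_top_annSubmodule fun x hx y => hess.1.2.2 x hx y trivial) hne
    (inf_annSubmodule_eq_bot hsp hess.1)

end HomLieAlgebra

/-- For a semiprime Hom-Lie algebra `L` and a Hom-ideal `I` of `L`, one has
`I ∩ Ann_L(I) = {0}`, and `I` is essential iff `Ann_L(I) = {0}`. -/
theorem semiprime_inter_ann_and_essential_iff
    {𝔽 L : Type*} [Field 𝔽] [AddCommGroup L] [Module 𝔽 L]
    (H : HomLieAlgebra 𝔽 L) (hsp : H.IsSemiprimeOn ⊤)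
    (I : Submodule 𝔽 L) (hI : H.IsIdealOf ⊤ I) :
    (I : Set L) ∩ H.annIn ⊤ (I : Set L) = {0} ∧
    (H.IsEssentialIdealOf ⊤ I ↔ H.annIn ⊤ (I : Set L) = {0}) := by
  have hset : ∀ p : Submodule 𝔽 L, (p : Set L) = {0} ↔ p = ⊥ := fun p => by
    rw [← Submodule.bot_coe (R := 𝔽), SetLike.coe_set_eq]
  refine ⟨?_, ?_⟩
  · rw [← H.coe_annSubmodule, ← Submodule.coe_inf, hset]
    exact HomLieAlgebra.inf_annSubmodule_eq_bot hsp hI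
  · rw [← H.coe_annSubmodule, hset]
    exact ⟨HomLieAlgebra.annSubmodule_eq_bot_of_isEssentialIdealOf hsp,
      HomLieAlgebra.isEssentialIdealOf_of_annSubmodule_eq_bot hI⟩
end

section
/- Let L ⊆ Q be an extension of Hom-Lie algebras such that Q is a weak algebra of quotients of L. If I is a nonzero Hom-ideal of Q, then I ∩ L is a nonzero Hom-ideal of L. -/
namespace HomLieAlgebra

variable {𝔽 : Type*} [Field 𝔽] {Q : Type*} [AddCommGroup Q] [Module 𝔽 Q]
  {H : HomLieAlgebra 𝔽 Q} {L M I : Submodule 𝔽 Q}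

theorem IsIdealOf.bracket_mem_of_mem_right (hI : H.IsIdealOf M I) {x y : Q}
    (hx : x ∈ M) (hy : y ∈ I) : H.bracket x y ∈ I := by
  rw [H.skew]
  exact I.neg_mem (hI.2.2 y hy x hx)

theorem IsIdealOf.inf_of_isSubalgebra (hI : H.IsIdealOf M I) (hL : H.IsSubalgebra L)
    (hLM : L ≤ M) : H.IsIdealOf L (I ⊓ L) :=
  ⟨inf_le_right, fun x hx => ⟨hI.2.1 x hx.1, hL.1 x hx.2⟩,
    fun x hx y hy => ⟨hI.2.2 x hx.1 y (hLM hy), hL.2 x hx.2 y hy⟩⟩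

theorem IsWeakAlgebraOfQuotients.inf_ne_bot (hw : H.IsWeakAlgebraOfQuotients L)
    (hI : H.IsIdealOf ⊤ I) (hI0 : I ≠ ⊥) : I ⊓ L ≠ ⊥ := by
  obtain ⟨q, hqI, hq0⟩ := Submodule.exists_mem_ne_zero_of_ne_bot hI0
  obtain ⟨x, -, hne, hmemL⟩ := hw q hq0
  have hmemI : H.bracket x (H.alpha q) ∈ I :=
    hI.bracket_mem_of_mem_right Submodule.mem_top (hI.2.1 q hqI)
  exact Submodule.ne_bot_iff _ |>.mpr ⟨_, ⟨hmemI, hmemL⟩, hne⟩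

end HomLieAlgebra

/-- If `Q` is a weak algebra of quotients of its Hom-subalgebra `L` and `I` is a
nonzero Hom-ideal of `Q`, then `I ∩ L` is a nonzero Hom-ideal of `L`. -/
theorem inf_nonzero_ideal_of_weakQuotients
    {𝔽 Q : Type*} [Field 𝔽] [AddCommGroup Q] [Module 𝔽 Q]
    (H : HomLieAlgebra 𝔽 Q) (L : Submodule 𝔽 Q) (hL : H.IsSubalgebra L)
    (hw : H.IsWeakAlgebraOfQuotients L)
    (I : Submodule 𝔽 Q) (hI : H.IsIdealOf ⊤ I) (hI0 : I ≠ ⊥) :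
    H.IsIdealOf L (I ⊓ L) ∧ I ⊓ L ≠ ⊥ := by
  exact ⟨hI.inf_of_isSubalgebra hL le_top, hw.inf_ne_bot hI hI0⟩
end

section
/- Let L ⊆ Q be an extension of Hom-Lie algebras such that Q is a weak algebra of quotients of L, and let I be a Hom-ideal of L with Ann_L(I) = {0}. Then there is no nonzero element x ∈ Q such that [α(x),I] = {0}. -/
namespace HomLieAlgebra

variable {𝔽 : Type*} [Field 𝔽] {Q : Type*} [AddCommGroup Q] [Module 𝔽 Q]
variable (H : HomLieAlgebra 𝔽 Q)

/-- Jacobi for `y, z, α x`, where the middle term vanishes by `[α x, y] = 0` and the last is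
`α [α x, [y, z]] = 0` by (2.1). -/
theorem bracket_bracket_alpha_eq_zero {x y z : Q} (hy : H.bracket (H.alpha x) y = 0)
    (hyz : H.bracket (H.alpha x) (H.bracket y z) = 0) :
    H.bracket (H.bracket z (H.alpha x)) (H.alpha y) = 0 := by
  have hjac := H.jacobi y z (H.alpha x)
  rw [hy, ← H.comm₁ (H.alpha x), hyz, map_zero, map_zero, add_zero, add_zero] at hjac
  rw [H.skew, hjac, neg_zero]

theorem bracket_alpha_mem_annIn {L I : Submodule 𝔽 Q} (hI : H.IsIdealOf L I) {x z : Q}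
    (hx : ∀ y ∈ I, H.bracket (H.alpha x) y = 0) (hz : z ∈ L)
    (hzx : H.bracket z (H.alpha x) ∈ L) :
    H.bracket z (H.alpha x) ∈ H.annIn L (I : Set Q) :=
  ⟨hzx, fun y hy => H.bracket_bracket_alpha_eq_zero (hx y hy) (hx _ (hI.2.2 y hy z hz))⟩

end HomLieAlgebra

theorem no_nonzero_alpha_annihilating_element_general
    {𝔽 Q : Type*} [Field 𝔽] [AddCommGroup Q] [Module 𝔽 Q]
    (H : HomLieAlgebra 𝔽 Q) (L : Submodule 𝔽 Q)
    (hw : H.IsWeakAlgebraOfQuotients L)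
    (I : Submodule 𝔽 Q) (hI : H.IsIdealOf L I)
    (hann : H.annIn L (I : Set Q) = {0}) :
    ¬ ∃ x : Q, x ≠ 0 ∧ ∀ y ∈ I, H.bracket (H.alpha x) y = 0 := by
  rintro ⟨x, hx0, hx⟩
  obtain ⟨z, hz, hzx0, hzx⟩ := hw x hx0
  have hmem := H.bracket_alpha_mem_annIn hI hx hz hzx
  rw [hann] at hmem
  exact hzx0 hmem

/-- If `Q` is a weak algebra of quotients of its Hom-subalgebra `L` and `I` is a
Hom-ideal of `L` with `Ann_L(I) = {0}`, then there is no nonzero `x ∈ Q` with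
`[α(x), I] = {0}`. -/
theorem no_nonzero_alpha_annihilating_element
    {𝔽 Q : Type*} [Field 𝔽] [AddCommGroup Q] [Module 𝔽 Q]
    (H : HomLieAlgebra 𝔽 Q) (L : Submodule 𝔽 Q) (hL : H.IsSubalgebra L)
    (hw : H.IsWeakAlgebraOfQuotients L)
    (I : Submodule 𝔽 Q) (hI : H.IsIdealOf L I)
    (hann : H.annIn L (I : Set Q) = {0}) :
    ¬ ∃ x : Q, x ≠ 0 ∧ ∀ y ∈ I, H.bracket (H.alpha x) y = 0 :=
  no_nonzero_alpha_annihilating_element_general H L hw I hI hann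
end

section
/- Let L ⊆ Q be an extension of Hom-Lie algebras such that Q is a weak algebra of quotients of L. Then for every Hom-ideal I of L, Ann_L(I) = {0} implies Ann_Q(I) = {0}, where Ann_Q(I) = {q ∈ Q : [q,α(y)] = 0 for all y ∈ I}. -/
namespace HomLieAlgebra

variable {𝔽 : Type*} [Field 𝔽] {Q : Type*} [AddCommGroup Q] [Module 𝔽 Q]
variable (H : HomLieAlgebra 𝔽 Q)

theorem zero_mem_annIn (M : Submodule 𝔽 Q) (S : Set Q) : (0 : Q) ∈ H.annIn M S :=
  ⟨M.zero_mem, fun _ _ => by simp⟩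

variable {H}

theorem bracket_alpha_eq_zero_of_mem_annIn {M : Submodule 𝔽 Q} {S : Set Q} {q y : Q}
    (hq : q ∈ H.annIn M S) (hy : y ∈ S) : H.bracket (H.alpha q) y = 0 := by
  rw [← H.comm₁, H.comm₂, hq.2 y hy]

theorem alpha_mem_annIn_top {S : Set Q} {q : Q} (hq : q ∈ H.annIn ⊤ S) :
    H.alpha q ∈ H.annIn ⊤ S :=
  ⟨trivial, fun y hy => by rw [← H.comm₁, hq.2 y hy, map_zero]⟩

/-- Jacobi for `y, x, α q`: the other two terms vanish because `q` annihilates `I` and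
`[y, x] ∈ I`. -/
theorem bracket_alpha_mem_annIn_top {L I : Submodule 𝔽 Q} (hI : H.IsIdealOf L I) {x q : Q}
    (hx : x ∈ L) (hq : q ∈ H.annIn ⊤ (I : Set Q)) :
    H.bracket x (H.alpha q) ∈ H.annIn ⊤ (I : Set Q) := by
  refine ⟨trivial, fun y hy => ?_⟩
  have hqy : H.bracket (H.alpha q) y = 0 := bracket_alpha_eq_zero_of_mem_annIn hq hy
  have hqyx : H.bracket (H.alpha (H.alpha q)) (H.bracket y x) = 0 :=
    bracket_alpha_eq_zero_of_mem_annIn (alpha_mem_annIn_top hq) (hI.2.2 y hy x hx)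
  have jacobi := H.jacobi y x (H.alpha q)
  rw [hqy, hqyx, map_zero, add_zero, add_zero] at jacobi
  rw [H.skew, jacobi, neg_zero]

end HomLieAlgebra

theorem annQ_eq_zero_of_annL_eq_zero_general
    {𝔽 Q : Type*} [Field 𝔽] [AddCommGroup Q] [Module 𝔽 Q]
    (H : HomLieAlgebra 𝔽 Q) (L : Submodule 𝔽 Q)
    (hw : H.IsWeakAlgebraOfQuotients L) :
    ∀ I : Submodule 𝔽 Q, H.IsIdealOf L I → H.annIn L (I : Set Q) = {0} →
      H.annIn ⊤ (I : Set Q) = {0} := by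
  intro I hI hAnn
  refine Set.eq_singleton_iff_unique_mem.2 ⟨H.zero_mem_annIn ⊤ I, fun q hq => ?_⟩
  by_contra hq0
  obtain ⟨x, hxL, hne, hxqL⟩ := hw q hq0
  have hxq : H.bracket x (H.alpha q) ∈ H.annIn L I :=
    ⟨hxqL, (H.bracket_alpha_mem_annIn_top hI hxL hq).2⟩
  rw [hAnn] at hxq
  exact hne hxq

/-- If `Q` is a weak algebra of quotients of its Hom-subalgebra `L`, then for every
Hom-ideal `I` of `L`, `Ann_L(I) = {0}` implies `Ann_Q(I) = {0}`. -/
theorem annQ_eq_zero_of_annL_eq_zero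
    {𝔽 Q : Type*} [Field 𝔽] [AddCommGroup Q] [Module 𝔽 Q]
    (H : HomLieAlgebra 𝔽 Q) (L : Submodule 𝔽 Q) (hL : H.IsSubalgebra L)
    (hw : H.IsWeakAlgebraOfQuotients L) :
    ∀ I : Submodule 𝔽 Q, H.IsIdealOf L I → H.annIn L (I : Set Q) = {0} →
      H.annIn ⊤ (I : Set Q) = {0} :=
  annQ_eq_zero_of_annL_eq_zero_general H L hw
end
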